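/- arXiv:1805.09415 — 2 statements merged into one kernel-verified Lean document; each statement's English description precedes it below -/
import Mathlib

section
/- Let (X_t) be a random process over the reals, and let T = inf{t : X_t ≤ 0}. Suppose (a) X_t ≥ 0 for all t ≤ T, (b) there is δ > 0 such that X_t − E[X_{t+1} | X_0,…,X_t] ≥ δ for all t < T, and (c) there is c ≥ 0 such that |X_{t+1} − X_t| ≤ c for all t < T. Then E[T | X_0] ≤ X_0/δ. -/
open MeasureTheory ProbabilityTheory Filter
open scoped ENNReal NNReal

/-!
Let `Y n = X (n ∧ T) + δ (n ∧ T)`. Its increments `1{k < T} (X (k+1) - X k + δ)` have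
nonpositive conditional expectation given `X 0, …, X k` by the drift condition, so
`E[Y n | X 0] ≤ Y 0 = X 0`. Since `X (n ∧ T) ≥ 0`, this gives `δ E[n ∧ T | X 0] ≤ X 0`, and monotone
convergence in `n` gives the bound on `E[T | X 0]`.
-/

/-- The natural filtration of the process `X` up to time `t`:
the σ-algebra generated by `X 0, …, X t`. -/
noncomputable def natSigma {Ω : Type*} [MeasurableSpace Ω] (X : ℕ → Ω → ℝ) (t : ℕ) :
    MeasurableSpace Ω :=
  ⨆ s ∈ Finset.range (t + 1), MeasurableSpace.comap (X s) inferInstance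

/-- The first-hitting time `T = inf {t : X t ≤ 0}` (equal to `⊤` if no such time exists). -/
noncomputable def hitZero {Ω : Type*} (X : ℕ → Ω → ℝ) (ω : Ω) : ℕ∞ :=
  sInf ((fun n : ℕ => (n : ℕ∞)) '' {t : ℕ | X t ω ≤ 0})

theorem add_sum_range_ite_lt_sub {M : Type*} [AddCommGroup M] (x : ℕ → M) (τ : ℕ∞) (n : ℕ) :
    x 0 + ∑ k ∈ Finset.range n, (if (k : ℕ∞) < τ then x (k + 1) - x k else 0) =
      x (min (n : ℕ∞) τ).toNat := by
  induction n with
  | zero => simp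
  | succ n ih =>
    rw [Finset.sum_range_succ, ← add_assoc, ih, Nat.cast_succ]
    split_ifs with h
    · rw [min_eq_left h.le, min_eq_left (Order.add_one_le_of_lt h), ← Nat.cast_succ,
        ENat.toNat_natCast, ENat.toNat_natCast, add_sub_cancel]
    · rw [not_lt] at h
      rw [min_eq_right h, min_eq_right (h.trans (by simp)), add_zero]

theorem natCast_toNat_min_le (n : ℕ) (τ : ℕ∞) : ((min (n : ℕ∞) τ).toNat : ℕ∞) ≤ τ := by
  rw [ENat.natCast_toNat (ne_top_of_le_ne_top (ENat.natCast_ne_top n) (min_le_left _ _))]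
  exact min_le_right _ _

theorem iSup_toNat_min (τ : ℕ∞) : ⨆ n : ℕ, ((min (n : ℕ∞) τ).toNat : ℝ≥0∞) = τ := by
  induction τ using ENat.recTopCoe with
  | top => simp [ENNReal.iSup_natCast]
  | coe m =>
    simp only [← Nat.mono_cast.map_min, ENat.toNat_natCast, ENat.toENNReal_coe]
    exact le_antisymm (iSup_le fun n => by simp) (le_iSup_of_le m (by simp))

theorem sum_range_ite_lt_eq_toNat_min (τ : ℕ∞) (n : ℕ) :
    ∑ k ∈ Finset.range n, (if (k : ℕ∞) < τ then (1 : ℝ) else 0) = (min (n : ℕ∞) τ).toNat := by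
  simpa using add_sum_range_ite_lt_sub (fun k => (k : ℝ)) τ n

theorem mul_sum_ite_lt_le_add_sum_ite_lt {x : ℕ → ℝ} {τ : ℕ∞} (hx : ∀ t : ℕ, (t : ℕ∞) ≤ τ → 0 ≤ x t)
    (δ : ℝ) (n : ℕ) :
    δ * ∑ k ∈ Finset.range n, (if (k : ℕ∞) < τ then 1 else 0) ≤
      x 0 + ∑ k ∈ Finset.range n, (if (k : ℕ∞) < τ then x (k + 1) - (x k - δ) else 0) := by
  have hstopped := add_sum_range_ite_lt_sub (fun k => x k + δ * k) τ n
  simp only [Nat.cast_zero, mul_zero, add_zero, Nat.cast_succ] at hstopped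
  calc δ * ∑ k ∈ Finset.range n, (if (k : ℕ∞) < τ then 1 else 0)
      = δ * (min (n : ℕ∞) τ).toNat := by rw [sum_range_ite_lt_eq_toNat_min]
    _ ≤ x (min (n : ℕ∞) τ).toNat + δ * (min (n : ℕ∞) τ).toNat :=
      le_add_of_nonneg_left (hx _ (natCast_toNat_min_le n τ))
    _ = _ := by
      rw [← hstopped]
      exact congrArg _ (Finset.sum_congr rfl fun k _ => by split_ifs <;> ring)

theorem lintegral_enat_eq_iSup_lintegral_sum_indicator {Ω : Type*} [MeasurableSpace Ω] (ν : Measure Ω) {τ : Ω → ℕ∞}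
    (hτ : ∀ k : ℕ, MeasurableSet {ω | (k : ℕ∞) < τ ω}) :
    ∫⁻ ω, (τ ω : ℝ≥0∞) ∂ν = ⨆ n : ℕ,
      ∫⁻ ω, ENNReal.ofReal (∑ k ∈ Finset.range n, {ω | (k : ℕ∞) < τ ω}.indicator 1 ω) ∂ν := by
  have hsum (n : ℕ) (ω : Ω) : ∑ k ∈ Finset.range n, {ω | (k : ℕ∞) < τ ω}.indicator 1 ω =
      ((min (n : ℕ∞) (τ ω)).toNat : ℝ) := by
    simpa [Set.indicator_apply] using sum_range_ite_lt_eq_toNat_min (τ ω) n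
  rw [← lintegral_iSup (fun n => (Finset.measurable_sum _ fun k _ =>
      measurable_one.indicator (hτ k)).ennreal_ofReal) fun n m hnm ω =>
    ENNReal.ofReal_le_ofReal (Finset.sum_le_sum_of_subset_of_nonneg (Finset.range_mono hnm)
      fun k _ _ => Set.indicator_nonneg (fun _ _ => zero_le_one) ω)]
  simp only [hsum, ENNReal.ofReal_natCast, iSup_toNat_min]

section ConditionalExpectation

variable {Ω : Type*} {m m₀ : MeasurableSpace Ω} {μ : Measure Ω}

theorem condExp_indicator_sub_nonpos {m' : MeasurableSpace Ω} (hmm' : m ≤ m') (hm' : m' ≤ m₀)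
    [SigmaFinite (μ.trim hm')] {A : Set Ω} (hA : MeasurableSet[m'] A) {Y Z : Ω → ℝ}
    (hY : Integrable Y μ) (hZ : Integrable Z μ) (hZm : StronglyMeasurable[m'] Z)
    (hle : ∀ᵐ ω ∂μ, ω ∈ A → μ[Y | m'] ω ≤ Z ω) :
    μ[A.indicator (Y - Z) | m] ≤ᵐ[μ] 0 := by
  refine (condExp_condExp_of_le hmm' hm').symm.trans_le (condExp_nonpos ?_)
  filter_upwards [condExp_indicator (hY.sub hZ) hA, condExp_sub hY hZ m', hle] with ω h1 h2 h3
  rw [condExp_of_stronglyMeasurable hm' hZm hZ] at h2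
  rw [h1]
  by_cases hω : ω ∈ A
  · simpa [Set.indicator_of_mem hω, h2] using h3 hω
  · simp [Set.indicator_of_notMem hω]

theorem condExp_add_sum_le (hm : m ≤ m₀) [SigmaFinite (μ.trim hm)] {ι : Type*} {Z : Ω → ℝ}
    (hZm : StronglyMeasurable[m] Z) (hZ : Integrable Z μ) {D : ι → Ω → ℝ} {s : Finset ι}
    (hD : ∀ k ∈ s, Integrable (D k) μ) (hDm : ∀ k ∈ s, μ[D k | m] ≤ᵐ[μ] 0) :
    μ[Z + ∑ k ∈ s, D k | m] ≤ᵐ[μ] Z := by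
  have hsum : ∀ᵐ ω ∂μ, ∀ k ∈ s, μ[D k | m] ω ≤ 0 := (ae_ball_iff s.countable_toSet).2 hDm
  filter_upwards [condExp_add hZ (integrable_finsetSum' s hD) m, condExp_finsetSum hD m, hsum]
    with ω h1 h2 h3
  rw [h1, Pi.add_apply, condExp_of_stronglyMeasurable hm hZm hZ, h2, Finset.sum_apply]
  exact add_le_of_nonpos_right (Finset.sum_nonpos h3)

theorem condExp_le_div_of_smul_le_add_sum (hm : m ≤ m₀) [SigmaFinite (μ.trim hm)] {ι : Type*}
    {δ : ℝ} (hδ : 0 < δ) {f Z : Ω → ℝ} (hf : Integrable f μ) (hZm : StronglyMeasurable[m] Z)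
    (hZ : Integrable Z μ) {D : ι → Ω → ℝ} {s : Finset ι} (hD : ∀ k ∈ s, Integrable (D k) μ)
    (hDm : ∀ k ∈ s, μ[D k | m] ≤ᵐ[μ] 0) (hle : δ • f ≤ᵐ[μ] Z + ∑ k ∈ s, D k) :
    μ[f | m] ≤ᵐ[μ] fun ω => Z ω / δ := by
  filter_upwards [condExp_smul δ f m,
    condExp_mono (hf.smul δ) (hZ.add (integrable_finsetSum' s hD)) hle,
    condExp_add_sum_le hm hZm hZ hD hDm] with ω h1 h2 h3
  rw [h1, Pi.smul_apply, smul_eq_mul] at h2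
  rw [le_div_iff₀ hδ, mul_comm]
  exact h2.trans h3

theorem ae_lintegral_condExpKernel_le [StandardBorelSpace Ω] [IsFiniteMeasure μ] (hm : m ≤ m₀)
    {f h : Ω → ℝ} (hf0 : 0 ≤ f) (hf : Integrable f μ) (hle : μ[f | m] ≤ᵐ[μ] h) :
    ∀ᵐ ω ∂μ, ∫⁻ y, ENNReal.ofReal (f y) ∂condExpKernel μ m ω ≤ ENNReal.ofReal (h ω) := by
  filter_upwards [condExp_ae_eq_integral_condExpKernel hm hf, hf.condExpKernel_ae, hle]
    with ω h1 h2 h3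
  rw [← ofReal_integral_eq_lintegral_ofReal h2 (ae_of_all _ hf0), ← h1]
  exact ENNReal.ofReal_le_ofReal h3

end ConditionalExpectation

theorem lt_hitZero_iff {Ω : Type*} (X : ℕ → Ω → ℝ) (ω : Ω) (k : ℕ) :
    (k : ℕ∞) < hitZero X ω ↔ ∀ j ≤ k, 0 < X j ω := by
  rw [← not_le, ← ENat.lt_add_one_iff (ENat.natCast_ne_top k), hitZero, sInf_lt_iff]
  simp only [Set.mem_image, Set.mem_ofPred_eq, exists_exists_and_eq_and, not_exists, not_and]
  refine forall_congr' fun j => ?_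
  norm_cast
  rw [Nat.lt_succ_iff, ← not_lt (b := X j ω)]
  exact not_imp_not

section NaturalFiltration

variable {Ω : Type*} [MeasurableSpace Ω] (X : ℕ → Ω → ℝ)

theorem comap_le_natSigma {s t : ℕ} (hst : s ≤ t) :
    MeasurableSpace.comap (X s) inferInstance ≤ natSigma X t :=
  le_iSup₂ (f := fun s (_ : s ∈ Finset.range (t + 1)) => MeasurableSpace.comap (X s) inferInstance)
    s (Finset.mem_range.2 (Nat.lt_succ_of_le hst))

theorem natSigma_mono {s t : ℕ} (hst : s ≤ t) : natSigma X s ≤ natSigma X t :=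
  iSup₂_le fun _ hr => comap_le_natSigma X ((Nat.lt_succ_iff.1 (Finset.mem_range.1 hr)).trans hst)

theorem natSigma_zero : natSigma X 0 = MeasurableSpace.comap (X 0) inferInstance := by
  simp [natSigma]

theorem natSigma_le {X : ℕ → Ω → ℝ} (hX : ∀ t, Measurable (X t)) (t : ℕ) :
    natSigma X t ≤ ‹MeasurableSpace Ω› :=
  iSup₂_le fun s _ => (hX s).comap_le

theorem stronglyMeasurable_natSigma {s t : ℕ} (hst : s ≤ t) :
    StronglyMeasurable[natSigma X t] (X s) :=
  (Measurable.of_comap_le (comap_le_natSigma X hst)).stronglyMeasurable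

theorem measurableSet_lt_hitZero (k : ℕ) :
    MeasurableSet[natSigma X k] {ω | (k : ℕ∞) < hitZero X ω} := by
  simp_rw [lt_hitZero_iff, Set.ofPred_forall]
  exact MeasurableSet.iInter fun j => MeasurableSet.iInter fun hj =>
    comap_le_natSigma X hj _ ⟨Set.Ioi 0, measurableSet_Ioi, rfl⟩

end NaturalFiltration

theorem upper_additive_drift_bounded_step_size_general
    {Ω : Type*} [MeasurableSpace Ω] [StandardBorelSpace Ω]
    (μ : Measure Ω) [IsProbabilityMeasure μ]
    (X : ℕ → Ω → ℝ) (hXmeas : ∀ t, Measurable (X t)) (hXint : ∀ t, Integrable (X t) μ)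
    (T : Ω → ℕ∞) (hT : ∀ ω, T ω = hitZero X ω)
    (δ : ℝ) (hδ : 0 < δ)
    (hnonneg : ∀ t : ℕ, ∀ᵐ ω ∂μ, (t : ℕ∞) ≤ T ω → 0 ≤ X t ω)
    (hdrift : ∀ t : ℕ, ∀ᵐ ω ∂μ, (t : ℕ∞) < T ω →
      δ ≤ X t ω - (μ[X (t + 1) | natSigma X t]) ω) :
    ∀ᵐ ω ∂μ,
      (∫⁻ ω', (T ω' : ℝ≥0∞) ∂(condExpKernel μ (MeasurableSpace.comap (X 0) inferInstance) ω))
        ≤ ENNReal.ofReal (X 0 ω / δ) := by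
  obtain rfl : T = hitZero X := funext hT
  set A : ℕ → Set Ω := fun k => {ω | (k : ℕ∞) < hitZero X ω}
  have hA (k : ℕ) : MeasurableSet (A k) := natSigma_le hXmeas k _ (measurableSet_lt_hitZero X k)
  -- `X 0 + ∑ k < n, D k = X (n ∧ T) + δ (n ∧ T)` and `g n = n ∧ T`
  set D : ℕ → Ω → ℝ := fun k => (A k).indicator (X (k + 1) - (X k - fun _ => δ))
  set g : ℕ → Ω → ℝ := fun n ω => ∑ k ∈ Finset.range n, (A k).indicator 1 ω
  have hg_int (n : ℕ) : Integrable (g n) μ :=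
    integrable_finsetSum _ fun k _ => (integrable_const (1 : ℝ)).indicator (hA k)
  have hD_int (k : ℕ) : Integrable (D k) μ :=
    ((hXint (k + 1)).sub ((hXint k).sub (integrable_const δ))).indicator (hA k)
  have hD_le (k : ℕ) : μ[D k | natSigma X 0] ≤ᵐ[μ] 0 := by
    refine condExp_indicator_sub_nonpos (natSigma_mono X k.zero_le) (natSigma_le hXmeas k)
      (measurableSet_lt_hitZero X k) (hXint (k + 1)) ((hXint k).sub (integrable_const δ))
      ((stronglyMeasurable_natSigma X le_rfl).sub stronglyMeasurable_const) ?_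
    filter_upwards [hdrift k] with ω h hω
    rw [Pi.sub_apply]
    linarith [h hω]
  have hdom (n : ℕ) : δ • g n ≤ᵐ[μ] X 0 + ∑ k ∈ Finset.range n, D k := by
    filter_upwards [ae_all_iff.2 hnonneg] with ω hω
    simpa [g, D, A, Set.indicator_apply, Finset.mul_sum] using
      mul_sum_ite_lt_le_add_sum_ite_lt hω δ n
  have hg_le (n : ℕ) : μ[g n | natSigma X 0] ≤ᵐ[μ] fun ω => X 0 ω / δ :=
    condExp_le_div_of_smul_le_add_sum (natSigma_le hXmeas 0) hδ (hg_int n)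
      (stronglyMeasurable_natSigma X le_rfl) (hXint 0) (fun k _ => hD_int k)
      (fun k _ => hD_le k) (hdom n)
  rw [← natSigma_zero]
  filter_upwards [ae_all_iff.2 fun n => ae_lintegral_condExpKernel_le (natSigma_le hXmeas 0)
    (fun ω => Finset.sum_nonneg fun k _ => Set.indicator_nonneg (fun _ _ => zero_le_one) ω)
    (hg_int n) (hg_le n)] with ω hω
  rw [lintegral_enat_eq_iSup_lintegral_sum_indicator _ hA]
  exact iSup_le hω

/-- **Upper Additive Drift, Bounded Step Size.** -/
theorem upper_additive_drift_bounded_step_size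
    {Ω : Type*} [MeasurableSpace Ω] [StandardBorelSpace Ω]
    (μ : Measure Ω) [IsProbabilityMeasure μ]
    (X : ℕ → Ω → ℝ) (hXmeas : ∀ t, Measurable (X t)) (hXint : ∀ t, Integrable (X t) μ)
    (T : Ω → ℕ∞) (hT : ∀ ω, T ω = hitZero X ω)
    (δ : ℝ) (hδ : 0 < δ) (c : ℝ) (hc : 0 ≤ c)
    (hnonneg : ∀ t : ℕ, ∀ᵐ ω ∂μ, (t : ℕ∞) ≤ T ω → 0 ≤ X t ω)
    (hdrift : ∀ t : ℕ, ∀ᵐ ω ∂μ, (t : ℕ∞) < T ω →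
      δ ≤ X t ω - (μ[X (t + 1) | natSigma X t]) ω)
    (hstep : ∀ t : ℕ, ∀ᵐ ω ∂μ, (t : ℕ∞) < T ω → |X (t + 1) ω - X t ω| ≤ c) :
    ∀ᵐ ω ∂μ,
      (∫⁻ ω', (T ω' : ℝ≥0∞) ∂(condExpKernel μ (MeasurableSpace.comap (X 0) inferInstance) ω))
        ≤ ENNReal.ofReal (X 0 ω / δ) :=
  upper_additive_drift_bounded_step_size_general μ X hXmeas hXint T hT δ hδ hnonneg hdrift
end

section
/- Let (X_t) be a random process over the reals, let x_min > 0, and let T = inf{t : X_t ≤ x_min}. Suppose (a) X_t ≥ x_min for all t ≤ T, and (b) there is δ > 0 such that X_t − E[X_{t+1} | X_0,…,X_t] ≥ δ·X_t for all t < T. Then E[T | X_0] ≤ ln(X_0/x_min)/δ. -/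
open MeasureTheory ProbabilityTheory Filter
open scoped ENNReal NNReal

/-!
Run the additive drift argument on the potential `Y t = log (X (t ∧ T) / xmin)`, which is
nonnegative because the process stays above `xmin` up to `T`. On `{t < T}` we have
`log (X (t+1) / X t) ≤ X (t+1) / X t - 1`, so the multiplicative drift condition becomes
`E[Y (t+1) | X 0, …, X t] ≤ Y t - δ 1{t < T}`. Conditioning on `X 0` and telescoping gives
`δ ∑_{t < N} P(t < T | X 0) ≤ Y 0 = log (X 0 / xmin)`, and `E[T | X 0] = ∑_t P(t < T | X 0)`.
-/

open Real

lemma ENat.natCast_succ_le_of_lt {t : ℕ} {n : ℕ∞} (h : (t : ℕ∞) < n) :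
    ((t + 1 : ℕ) : ℕ∞) ≤ n := by
  exact_mod_cast ENat.natCast_add_one_le_iff.2 h

lemma ENat.toENNReal_eq_tsum_ite_lt (n : ℕ∞) :
    (n : ℝ≥0∞) = ∑' t : ℕ, if (t : ℕ∞) < n then 1 else 0 := by
  induction n using ENat.recTopCoe with
  | top => simp
  | coe n =>
    rw [tsum_eq_sum (s := Finset.range n) fun t ht => by simp_all]
    simp [Finset.filter_true_of_mem]

lemma sInf_image_natCast_eq_hittingAfter {Ω : Type*} {X : ℕ → Ω → ℝ} (s : Set ℝ) (ω : Ω) :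
    sInf ((fun n : ℕ => (n : ℕ∞)) '' {t | X t ω ∈ s}) = hittingAfter X s 0 ω := by
  classical
  simp only [hittingAfter_def, zero_le, true_and]
  split_ifs with h
  · change _ = ((sInf {t | X t ω ∈ s} : ℕ) : ℕ∞)
    rw [ENat.natCast_sInf (s := {t | X t ω ∈ s}) h, sInf_image]
  · simp only [not_exists] at h
    simp only [h, Set.ofPred_false, Set.image_empty, _root_.sInf_empty]
    rfl

section NaturalFiltration

variable {Ω : Type*} [MeasurableSpace Ω] {X : ℕ → Ω → ℝ}

lemma natSigma_eq_natural (hX : ∀ t, StronglyMeasurable (X t)) (t : ℕ) :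
    natSigma X t = Filtration.natural X hX t := by
  simp only [natSigma, Filtration.natural, Finset.mem_range, Nat.lt_succ_iff]

lemma comap_zero_le_natural (hX : ∀ t, StronglyMeasurable (X t)) (t : ℕ) :
    MeasurableSpace.comap (X 0) inferInstance ≤ Filtration.natural X hX t :=
  le_iSup₂_of_le (f := fun j (_ : j ≤ t) => MeasurableSpace.comap (X j) inferInstance) 0
    (Nat.zero_le t) le_rfl

end NaturalFiltration

section TailSum

variable {Ω : Type*} {m : MeasurableSpace Ω} [mΩ : MeasurableSpace Ω] {τ : Ω → ℕ∞}

theorem lintegral_toENNReal_eq_tsum_measure_lt (hτ : ∀ t : ℕ, MeasurableSet {ω | t < τ ω})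
    (ν : Measure Ω) : ∫⁻ ω, (τ ω : ℝ≥0∞) ∂ν = ∑' t : ℕ, ν {ω | t < τ ω} := by
  have hind : ∀ ω, (τ ω : ℝ≥0∞) = ∑' t : ℕ, {ω | t < τ ω}.indicator 1 ω := fun ω => by
    simp only [ENat.toENNReal_eq_tsum_ite_lt, Set.indicator_apply, Set.mem_ofPred_eq,
      Pi.one_apply]
  simp_rw [hind]
  rw [lintegral_tsum fun t => (measurable_one.indicator (hτ t)).aemeasurable]
  exact tsum_congr fun t => lintegral_indicator_one (hτ t)

theorem ae_lintegral_condExpKernel_le_of_sum_condExp_le [StandardBorelSpace Ω] {μ : Measure Ω}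
    [IsFiniteMeasure μ] (hm : m ≤ mΩ) (hτ : ∀ t : ℕ, MeasurableSet {ω | t < τ ω}) {B : Ω → ℝ}
    (hB : ∀ N, ∀ᵐ ω ∂μ, ∑ t ∈ Finset.range N, μ[{ω | t < τ ω}.indicator 1 | m] ω ≤ B ω) :
    ∀ᵐ ω ∂μ, ∫⁻ ω', (τ ω' : ℝ≥0∞) ∂(condExpKernel μ m ω) ≤ ENNReal.ofReal (B ω) := by
  have hkernel : ∀ᵐ ω ∂μ, ∀ t : ℕ,
      (condExpKernel μ m ω).real {ω | t < τ ω} = μ[{ω | t < τ ω}.indicator 1 | m] ω :=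
    ae_all_iff.2 fun t => condExpKernel_ae_eq_condExp hm (hτ t)
  filter_upwards [hkernel, ae_all_iff.2 hB] with ω hk hBω
  rw [lintegral_toENNReal_eq_tsum_measure_lt hτ]
  refine ENNReal.tsum_le_of_sum_range_le fun N => ?_
  calc ∑ t ∈ Finset.range N, condExpKernel μ m ω {ω | t < τ ω}
      = ENNReal.ofReal (∑ t ∈ Finset.range N, μ[{ω | t < τ ω}.indicator 1 | m] ω) := by
        rw [ENNReal.ofReal_sum_of_nonneg fun t _ => hk t ▸ measureReal_nonneg]
        exact Finset.sum_congr rfl fun t _ => by rw [← hk t, ofReal_measureReal]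
    _ ≤ ENNReal.ofReal (B ω) := ENNReal.ofReal_le_ofReal (hBω N)

end TailSum

section ConditionalDrift

variable {Ω : Type*} {m mΩ : MeasurableSpace Ω} {μ : Measure Ω} [IsFiniteMeasure μ]
  {F : ℕ → MeasurableSpace Ω} {Y Z : ℕ → Ω → ℝ} {δ : ℝ}

theorem condExp_succ_le_of_condExp_le_sub (hmF : ∀ t, m ≤ F t) (hF : ∀ t, F t ≤ mΩ)
    (hY : ∀ t, Integrable (Y t) μ) (hZ : ∀ t, Integrable (Z t) μ)
    (hstep : ∀ t, μ[Y (t + 1) | F t] ≤ᵐ[μ] Y t - δ • Z t) (t : ℕ) :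
    μ[Y (t + 1) | m] ≤ᵐ[μ] μ[Y t | m] - δ • μ[Z t | m] := by
  have htower : μ[μ[Y (t + 1) | F t] | m] =ᵐ[μ] μ[Y (t + 1) | m] :=
    condExp_condExp_of_le (hmF t) (hF t)
  have hmono := condExp_mono (m := m) integrable_condExp ((hY t).sub ((hZ t).smul δ)) (hstep t)
  have hlin : μ[Y t - δ • Z t | m] =ᵐ[μ] μ[Y t | m] - δ • μ[Z t | m] :=
    (condExp_sub (hY t) ((hZ t).smul δ) m).trans (EventuallyEq.rfl.sub (condExp_smul δ (Z t) m))
  filter_upwards [htower, hmono, hlin] with ω h1 h2 h3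
  rw [← h1, ← h3]
  exact h2

theorem sum_condExp_le_of_condExp_le_sub (hmF : ∀ t, m ≤ F t) (hF : ∀ t, F t ≤ mΩ)
    (hY : ∀ t, Integrable (Y t) μ) (hY_nonneg : ∀ t, 0 ≤ᵐ[μ] Y t)
    (hZ : ∀ t, Integrable (Z t) μ) (hstep : ∀ t, μ[Y (t + 1) | F t] ≤ᵐ[μ] Y t - δ • Z t)
    (N : ℕ) : ∀ᵐ ω ∂μ, δ * ∑ t ∈ Finset.range N, μ[Z t | m] ω ≤ μ[Y 0 | m] ω := by
  have htelescope : ∀ N, ∀ᵐ ω ∂μ,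
      μ[Y N | m] ω + δ * ∑ t ∈ Finset.range N, μ[Z t | m] ω ≤ μ[Y 0 | m] ω := by
    intro N
    induction N with
    | zero => simp
    | succ N ih =>
      filter_upwards [ih, condExp_succ_le_of_condExp_le_sub hmF hF hY hZ hstep N] with ω h1 h2
      simp only [Pi.sub_apply, Pi.smul_apply, smul_eq_mul] at h2
      rw [Finset.sum_range_succ, mul_add]
      linarith
  filter_upwards [htelescope N, condExp_nonneg (m := m) (hY_nonneg N)] with ω h1
    (h2 : 0 ≤ μ[Y N | m] ω)
  linarith

/- `U⁻¹ 1_A` is `m`-measurable and bounded by `c⁻¹`, so it can be pulled out of the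
conditional expectation of `log (V / U) 1_A ≤ (V / U - 1) 1_A`. -/
theorem condExp_indicator_log_div_le (hm : m ≤ mΩ) {A : Set Ω} {U V : Ω → ℝ} {c : ℝ}
    (hc : 0 < c) (hA : MeasurableSet[m] A) (hU : Measurable[m] U)
    (hUc : ∀ᵐ ω ∂μ, ω ∈ A → c ≤ U ω) (hV : Integrable V μ) (hVpos : ∀ᵐ ω ∂μ, ω ∈ A → 0 < V ω)
    (hdrift : ∀ᵐ ω ∂μ, ω ∈ A → δ * U ω ≤ U ω - μ[V | m] ω)
    (hlog : Integrable (A.indicator fun ω => log (V ω / U ω)) μ) :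
    μ[A.indicator fun ω => log (V ω / U ω) | m] ≤ᵐ[μ] -δ • A.indicator 1 := by
  set g : Ω → ℝ := A.indicator fun ω => (U ω)⁻¹ with hg_def
  have hg : StronglyMeasurable[m] g := (hU.inv.indicator hA).stronglyMeasurable
  have hgV : Integrable (g * V) μ := by
    refine hV.bdd_mul (c := c⁻¹) (hg.mono hm).aestronglyMeasurable ?_
    filter_upwards [hUc] with ω hω
    by_cases hωA : ω ∈ A
    · have hUω := hω hωA
      rw [hg_def, Set.indicator_of_mem hωA, norm_inv, norm_of_nonneg (hc.trans_le hUω).le]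
      exact inv_anti₀ hc hUω
    · simp [g, hωA, hc.le]
  have hA1 : Integrable (A.indicator (1 : Ω → ℝ)) μ := (integrable_const 1).indicator (hm _ hA)
  have hpoint : A.indicator (fun ω => log (V ω / U ω)) ≤ᵐ[μ] g * V - A.indicator 1 := by
    filter_upwards [hUc, hVpos] with ω hUω hVω
    by_cases hωA : ω ∈ A
    · have hlog_le := log_le_sub_one_of_pos (div_pos (hVω hωA) (hc.trans_le (hUω hωA)))
      simpa [g, hωA, div_eq_inv_mul] using hlog_le
    · simp [g, hωA]
  have hpull : μ[g * V - A.indicator 1 | m] =ᵐ[μ] g * μ[V | m] - A.indicator 1 := by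
    refine (condExp_sub hgV hA1 m).trans ?_
    rw [condExp_of_stronglyMeasurable hm (stronglyMeasurable_one.indicator hA) hA1]
    exact (condExp_mul_of_stronglyMeasurable_left hg hgV hV).sub EventuallyEq.rfl
  have hbound : g * μ[V | m] - A.indicator 1 ≤ᵐ[μ] -δ • A.indicator 1 := by
    filter_upwards [hUc, hdrift] with ω hUω hω
    by_cases hωA : ω ∈ A
    · have : (U ω)⁻¹ * μ[V | m] ω ≤ 1 - δ := by
        rw [inv_mul_le_iff₀ (hc.trans_le (hUω hωA))]
        linarith [hω hωA]
      simp only [hg_def, Pi.sub_apply, Pi.mul_apply, Pi.smul_apply, smul_eq_mul,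
        Set.indicator_of_mem hωA, Pi.one_apply]
      linarith
    · simp [g, hωA]
  filter_upwards [condExp_mono hlog (hgV.sub hA1) hpoint, hpull, hbound] with ω h1 h2 h3
  exact h1.trans (h2 ▸ h3)

end ConditionalDrift

noncomputable def logPotential {Ω : Type*} (X : ℕ → Ω → ℝ) (T : Ω → ℕ∞) (c : ℝ) (t : ℕ)
    (ω : Ω) : ℝ :=
  log (stoppedProcess X T t ω / c)

lemma logPotential_zero {Ω : Type*} {X : ℕ → Ω → ℝ} {T : Ω → ℕ∞} {c : ℝ} :
    logPotential X T c 0 = fun ω => log (X 0 ω / c) := by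
  funext ω
  simp only [logPotential, stoppedProcess_eq_of_le (show ((0 : ℕ) : ℕ∞) ≤ T ω from bot_le)]

section LogPotential

variable {Ω : Type*} [mΩ : MeasurableSpace Ω] {μ : Measure Ω} {X : ℕ → Ω → ℝ} {T : Ω → ℕ∞}
  {c δ : ℝ}

lemma ae_le_stoppedProcess (hle : ∀ t : ℕ, ∀ᵐ ω ∂μ, t ≤ T ω → c ≤ X t ω) (t : ℕ) :
    ∀ᵐ ω ∂μ, c ≤ stoppedProcess X T t ω := by
  filter_upwards [ae_all_iff.2 hle] with ω h
  by_cases htT : (t : ℕ∞) ≤ T ω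
  · rw [stoppedProcess_eq_of_le htT]
    exact h t htT
  · obtain ⟨n, hn⟩ := WithTop.ne_top_iff_exists.1 (ne_top_of_lt (not_le.1 htT))
    rw [stoppedProcess_eq_of_ge (not_le.1 htT).le, ← hn]
    exact h n hn.le

lemma logPotential_nonneg (hc : 0 < c) (hle : ∀ t : ℕ, ∀ᵐ ω ∂μ, t ≤ T ω → c ≤ X t ω)
    (t : ℕ) : 0 ≤ᵐ[μ] logPotential X T c t := by
  filter_upwards [ae_le_stoppedProcess hle t] with ω h
  exact log_nonneg ((one_le_div hc).2 h)

lemma integrable_logPotential [IsFiniteMeasure μ] {ℱ : Filtration ℕ mΩ} (hc : 0 < c)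
    (hτ : IsStoppingTime ℱ T) (hXint : ∀ t, Integrable (X t) μ)
    (hle : ∀ t : ℕ, ∀ᵐ ω ∂μ, t ≤ T ω → c ≤ X t ω) (t : ℕ) :
    Integrable (logPotential X T c t) μ := by
  have hS := (integrable_stoppedProcess hτ hXint t).div_const c
  refine hS.mono' (measurable_log.comp_aemeasurable hS.aemeasurable).aestronglyMeasurable ?_
  filter_upwards [ae_le_stoppedProcess hle t] with ω h
  unfold logPotential
  have hx : 1 ≤ stoppedProcess X T t ω / c := (one_le_div hc).2 h
  rw [norm_of_nonneg (log_nonneg hx)]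
  linarith [log_le_sub_one_of_pos (zero_lt_one.trans_le hx)]

lemma logPotential_succ_ae_eq (hc : 0 < c) (hle : ∀ t : ℕ, ∀ᵐ ω ∂μ, t ≤ T ω → c ≤ X t ω)
    (t : ℕ) :
    logPotential X T c (t + 1) =ᵐ[μ]
      logPotential X T c t + {ω | t < T ω}.indicator fun ω => log (X (t + 1) ω / X t ω) := by
  filter_upwards [hle t, hle (t + 1)] with ω ht ht1
  by_cases htT : (t : ℕ∞) < T ω
  · have ht1T := ENat.natCast_succ_le_of_lt htT
    have hXt := hc.trans_le (ht htT.le)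
    have hXt1 := hc.trans_le (ht1 ht1T)
    simp only [logPotential, Pi.add_apply, Set.indicator_of_mem (s := {ω | t < T ω}) htT,
      stoppedProcess_eq_of_le htT.le, stoppedProcess_eq_of_le ht1T]
    rw [log_div hXt1.ne' hc.ne', log_div hXt.ne' hc.ne', log_div hXt1.ne' hXt.ne']
    ring
  · have hTt : T ω ≤ t := not_lt.1 htT
    simp only [logPotential, Pi.add_apply, Set.indicator_of_notMem (s := {ω | t < T ω}) htT,
      stoppedProcess_eq_of_ge hTt, stoppedProcess_eq_of_ge (hTt.trans (Nat.cast_le.2 t.le_succ)),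
      add_zero]

theorem condExp_logPotential_succ_le [IsFiniteMeasure μ] {ℱ : Filtration ℕ mΩ} (hc : 0 < c)
    (hX : StronglyAdapted ℱ X) (hXint : ∀ t, Integrable (X t) μ) (hτ : IsStoppingTime ℱ T)
    (hle : ∀ t : ℕ, ∀ᵐ ω ∂μ, t ≤ T ω → c ≤ X t ω)
    (hdrift : ∀ t : ℕ, ∀ᵐ ω ∂μ, t < T ω → δ * X t ω ≤ X t ω - μ[X (t + 1) | ℱ t] ω) (t : ℕ) :
    μ[logPotential X T c (t + 1) | ℱ t] ≤ᵐ[μ]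
      logPotential X T c t - δ • {ω | t < T ω}.indicator 1 := by
  have hY := integrable_logPotential hc hτ hXint hle
  have hYmeas : StronglyMeasurable[ℱ t] (logPotential X T c t) :=
    (measurable_log.comp
      ((hX.stoppedProcess_of_discrete hτ t).measurable.div_const c)).stronglyMeasurable
  have hsucc := logPotential_succ_ae_eq (μ := μ) hc hle t
  have hW : Integrable ({ω | t < T ω}.indicator fun ω => log (X (t + 1) ω / X t ω)) μ :=
    ((hY (t + 1)).sub (hY t)).congr (by filter_upwards [hsucc] with ω h; simp [h])
  have hdecomp : μ[logPotential X T c (t + 1) | ℱ t] =ᵐ[μ] logPotential X T c t +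
      μ[{ω | t < T ω}.indicator fun ω => log (X (t + 1) ω / X t ω) | ℱ t] := by
    refine (condExp_congr_ae hsucc).trans ((condExp_add (hY t) hW _).trans ?_)
    rw [condExp_of_stronglyMeasurable (ℱ.le t) hYmeas (hY t)]
  have hlogDrift := condExp_indicator_log_div_le (ℱ.le t) hc (hτ.measurableSet_gt t)
    (hX t).measurable (by filter_upwards [hle t] with ω h hω using h hω.le) (hXint (t + 1))
    (by filter_upwards [hle (t + 1)] with ω h hω
        using hc.trans_le (h (ENat.natCast_succ_le_of_lt hω)))
    (hdrift t) hW
  filter_upwards [hdecomp, hlogDrift] with ω h1 h2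
  rw [h1, Pi.add_apply, Pi.sub_apply, sub_eq_add_neg, ← Pi.neg_apply, ← neg_smul]
  exact add_le_add_right h2 _

end LogPotential

/-- **Upper Multiplicative Drift, Unbounded, Hitting Target.** -/
theorem upper_multiplicative_drift_unbounded_hitting_target
    {Ω : Type*} [MeasurableSpace Ω] [StandardBorelSpace Ω]
    (μ : Measure Ω) [IsProbabilityMeasure μ]
    (X : ℕ → Ω → ℝ) (hXmeas : ∀ t, Measurable (X t)) (hXint : ∀ t, Integrable (X t) μ)
    (xmin : ℝ) (hxmin : 0 < xmin)
    (T : Ω → ℕ∞)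
    (hT : ∀ ω, T ω = sInf ((fun n : ℕ => (n : ℕ∞)) '' {t : ℕ | X t ω ≤ xmin}))
    (δ : ℝ) (hδ : 0 < δ)
    (hnonneg : ∀ t : ℕ, ∀ᵐ ω ∂μ, (t : ℕ∞) ≤ T ω → xmin ≤ X t ω)
    (hdrift : ∀ t : ℕ, ∀ᵐ ω ∂μ, (t : ℕ∞) < T ω →
      δ * X t ω ≤ X t ω - (μ[X (t + 1) | natSigma X t]) ω) :
    ∀ᵐ ω ∂μ,
      (∫⁻ ω', (T ω' : ℝ≥0∞) ∂(condExpKernel μ (MeasurableSpace.comap (X 0) inferInstance) ω))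
        ≤ ENNReal.ofReal (Real.log (X 0 ω / xmin) / δ) := by
  set ℱ := Filtration.natural X fun t => (hXmeas t).stronglyMeasurable
  have hℱ : ∀ t, ℱ t = natSigma X t := fun t => (natSigma_eq_natural _ t).symm
  have hX : StronglyAdapted ℱ X := Filtration.stronglyAdapted_natural _
  have hτ : IsStoppingTime ℱ T := by
    have hT' : T = hittingAfter X (Set.Iic xmin) 0 :=
      funext fun ω => (hT ω).trans (sInf_image_natCast_eq_hittingAfter (Set.Iic xmin) ω)
    exact hT' ▸ hX.adapted.isStoppingTime_hittingAfter measurableSet_Iic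
  have hm : ∀ t, MeasurableSpace.comap (X 0) inferInstance ≤ ℱ t := comap_zero_le_natural _
  have hY := integrable_logPotential hxmin hτ hXint hnonneg
  have hY0 : μ[logPotential X T xmin 0 | MeasurableSpace.comap (X 0) inferInstance] =
      fun ω => log (X 0 ω / xmin) := by
    rw [logPotential_zero]
    exact condExp_of_stronglyMeasurable ((hm 0).trans (ℱ.le 0))
      (measurable_log.comp ((comap_measurable (X 0)).div_const xmin)).stronglyMeasurable
      (logPotential_zero (T := T) ▸ hY 0)
  have hstep := condExp_logPotential_succ_le hxmin hX hXint hτ hnonneg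
    (by simpa only [hℱ] using hdrift)
  refine ae_lintegral_condExpKernel_le_of_sum_condExp_le ((hm 0).trans (ℱ.le 0))
    (fun t => ℱ.le t _ (hτ.measurableSet_gt t)) fun N => ?_
  filter_upwards [sum_condExp_le_of_condExp_le_sub hm ℱ.le hY (logPotential_nonneg hxmin hnonneg)
    (fun t => (integrable_const 1).indicator (ℱ.le t _ (hτ.measurableSet_gt t))) hstep N] with ω h
  rw [hY0, mul_comm] at h
  exact (le_div_iff₀ hδ).2 h
end
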